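/- arXiv:2004.12423 — 2 statements merged into one kernel-verified Lean document; each statement's English description precedes it below -/
import Mathlib

section
/- Let (X,F) be a symmetric n-ary band. Then the set L = {ℓ_x : x ∈ X} of self-maps of X is closed under composition, and composition of maps restricted to L is associative, commutative and idempotent; that is, (L, ∘) is a semilattice. -/
namespace NaryBand

variable {X : Type*}

/-- Replace the window of length `n` starting at position `i` (0-based) of the
`(2*n-1)`-tuple `x` by the value of `F` on that window. -/
def contract {n : ℕ} (F : (Fin n → X) → X) (i : ℕ) (hn : 2 ≤ n) (hi : i ≤ n - 1)
    (x : Fin (2 * n - 1) → X) : Fin n → X :=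
  fun j =>
    if _h1 : (j : ℕ) < i then x ⟨(j : ℕ), by have := j.isLt; omega⟩
    else if _h2 : (j : ℕ) = i then
      F (fun k => x ⟨i + (k : ℕ), by have := k.isLt; omega⟩)
    else x ⟨(j : ℕ) + n - 1, by have := j.isLt; omega⟩

/-- `F` is an associative `n`-ary operation. -/
def NAssoc {n : ℕ} (hn : 2 ≤ n) (F : (Fin n → X) → X) : Prop :=
  ∀ (i : ℕ) (hi : i + 1 ≤ n - 1) (x : Fin (2 * n - 1) → X),
    F (contract F i hn (by omega) x) = F (contract F (i + 1) hn (by omega) x)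

/-- `F` is a symmetric `n`-ary operation. -/
def NSym {n : ℕ} (F : (Fin n → X) → X) : Prop :=
  ∀ (σ : Equiv.Perm (Fin n)) (x : Fin n → X), F (x ∘ σ) = F x

/-- `F` is an idempotent `n`-ary operation. -/
def NIdem {n : ℕ} (F : (Fin n → X) → X) : Prop :=
  ∀ x : X, F (fun _ => x) = x

/-- The associated binary operation `B(x,y) = F(x,…,x,y)` (with `n-1` copies of `x`). -/
def assocB {n : ℕ} (F : (Fin n → X) → X) (x y : X) : X :=
  F (fun j => if (j : ℕ) < n - 1 then x else y)

/-- The map `ℓ_x : y ↦ B(x,y)`. -/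
def ell {n : ℕ} (F : (Fin n → X) → X) (x : X) : X → X :=
  fun y => assocB F x y

/-- The `n`-ary extension `G^{n-1}(x₁,…,xₙ) = G(x₁, G(x₂, …, G(x_{n-1}, xₙ)…))`
of a binary operation `G`. -/
def nExt {n : ℕ} (hn : 1 ≤ n) (G : X → X → X) (x : Fin n → X) : X :=
  (List.ofFn (fun i : Fin (n - 1) => x ⟨(i : ℕ), by have := i.isLt; omega⟩)).foldr G
    (x ⟨n - 1, by omega⟩)

/-- The relation `σ`: `x σ y` iff `B(x,y) = y` and `B(y,x) = x`. -/
def sigmaRel {n : ℕ} (F : (Fin n → X) → X) (x y : X) : Prop :=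
  assocB F x y = y ∧ assocB F y x = x

/-- `(A, mul)` is an abelian group with identity `e` and inversion `inv`. -/
def IsAbelianGroup {A : Type*} (mul : A → A → A) (e : A) (inv : A → A) : Prop :=
  (∀ a b c, mul (mul a b) c = mul a (mul b c)) ∧
  (∀ a b, mul a b = mul b a) ∧
  (∀ a, mul e a = a) ∧
  (∀ a, mul (inv a) a = e)

/-- `k`-fold product `a * ⋯ * a` with respect to `mul` (with `powMul mul e 0 a = e`). -/
def powMul {A : Type*} (mul : A → A → A) (e : A) : ℕ → A → A
  | 0, _ => e
  | k + 1, a => mul a (powMul mul e k a)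

end NaryBand

open NaryBand

/-! The key identity is `F(s₀,…,ℓ_x(sᵢ),…,s_{n-1}) = ℓ_x(F(s₀,…,s_{n-1}))`: for `i = 0` it is
associativity applied to `(x,…,x,s₀,…,s_{n-1})`, and symmetry moves `i` anywhere. Idempotence of
`ℓ_x` is the case `s = (x,…,x,z)`, `i = 0`. Applying `ℓ_x` and `ℓ_y` to two different coordinates
of `(z,…,z)`, in either order, shows that they commute. Applying `ℓ_x` to each of the first `n-1`
coordinates of `(y,…,y,z)` gives `ℓ_{B(x,y)} z = ℓ_x^{n-1}(ℓ_y z) = ℓ_x(ℓ_y z)`. -/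

namespace NaryBand

variable {X : Type*} {n : ℕ} {hn : 2 ≤ n} {F : (Fin n → X) → X}

theorem NAssoc.apply_contract_eq_apply_contract_zero (hA : NAssoc hn F)
    (t : Fin (2 * n - 1) → X) (i : ℕ) (hi : i ≤ n - 1) :
    F (contract F i hn hi t) = F (contract F 0 hn (Nat.zero_le _) t) := by
  induction i with
  | zero => rfl
  | succ i ih => rw [← hA i hi t, ih]

theorem NAssoc.apply_update_zero (hA : NAssoc hn F) (x : X) (s : Fin n → X) :
    F (Function.update s ⟨0, by omega⟩ (ell F x (s ⟨0, by omega⟩))) = ell F x (F s) := by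
  -- `t = (x,…,x,s₀,…,s_{n-1})`: contracting its first window gives `(B(x,s₀),s₁,…)`, its last
  -- one gives `(x,…,x,F s)`.
  let t : Fin (2 * n - 1) → X := fun j =>
    if (j : ℕ) < n - 1 then x else s ⟨j - (n - 1), by omega⟩
  have hfirst : contract F 0 hn (Nat.zero_le _) t =
      Function.update s ⟨0, by omega⟩ (ell F x (s ⟨0, by omega⟩)) := by
    funext ⟨j, hj⟩
    simp only [contract, t, ell, assocB, Function.update_apply, Fin.ext_iff]
    split_ifs <;> first | omega | (congr 2; omega) | (congr 1; funext k)
    split_ifs <;> first | omega | rfl | (congr 2; omega)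
  have hlast : contract F (n - 1) hn le_rfl t =
      fun j : Fin n => if (j : ℕ) < n - 1 then x else F s := by
    funext ⟨j, hj⟩
    simp only [contract, t]
    split_ifs <;> first | omega | rfl | (congr 1; funext k)
    rw [if_neg (by omega)]
    congr 2
    omega
  rw [← hfirst, ← hA.apply_contract_eq_apply_contract_zero t (n - 1) le_rfl, hlast]
  rfl

theorem NAssoc.apply_update_ell (hA : NAssoc hn F) (hS : NSym F) (x : X) (s : Fin n → X)
    (i : Fin n) : F (Function.update s i (ell F x (s i))) = ell F x (F s) := by
  let σ := Equiv.swap (⟨0, by omega⟩ : Fin n) i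
  calc F (Function.update s i (ell F x (s i)))
      = F (Function.update s i (ell F x (s i)) ∘ σ) := (hS σ _).symm
    _ = F (Function.update (s ∘ σ) ⟨0, by omega⟩ (ell F x ((s ∘ σ) ⟨0, by omega⟩))) := by
      rw [Function.update_comp_equiv, Equiv.symm_swap, Equiv.swap_apply_right, Function.comp_apply,
        Equiv.swap_apply_left]
    _ = ell F x (F s) := by rw [hA.apply_update_zero, hS]

theorem ell_self (hI : NIdem F) (x : X) : ell F x x = x := by
  simpa [ell, assocB] using hI x

theorem ell_comp_self (hA : NAssoc hn F) (hI : NIdem F) (x : X) :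
    ell F x ∘ ell F x = ell F x := by
  funext z
  let s : Fin n → X := fun j => if (j : ℕ) < n - 1 then x else z
  have hs : s ⟨0, by omega⟩ = x := if_pos (show 0 < n - 1 by omega)
  have hupd : Function.update s ⟨0, by omega⟩ (ell F x (s ⟨0, by omega⟩)) = s := by
    rw [Function.update_eq_self_iff, hs, ell_self hI]
  have h := hA.apply_update_zero x s
  rw [hupd] at h
  exact h.symm

theorem NAssoc.apply_piecewise_ell (hA : NAssoc hn F) (hS : NSym F) (hI : NIdem F) (x : X)
    (s : Fin n → X) {S : Finset (Fin n)} (hne : S.Nonempty) :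
    F (S.piecewise (ell F x ∘ s) s) = ell F x (F s) := by
  induction hne using Finset.Nonempty.cons_induction with
  | singleton i =>
    rw [Finset.piecewise_singleton]
    exact hA.apply_update_ell hS x s i
  | cons i S hi _ ih =>
    have hsi : s i = S.piecewise (ell F x ∘ s) s i :=
      (Finset.piecewise_eq_of_notMem _ _ _ hi).symm
    rw [Finset.cons_eq_insert, Finset.piecewise_insert, Function.comp_apply, hsi,
      hA.apply_update_ell hS, ih]
    exact congrFun (ell_comp_self hA hI x) _

theorem ell_assocB (hA : NAssoc hn F) (hS : NSym F) (hI : NIdem F) (x y : X) :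
    ell F (assocB F x y) = ell F x ∘ ell F y := by
  funext z
  let s : Fin n → X := fun j => if (j : ℕ) < n - 1 then y else z
  let S := Finset.univ.filter fun j : Fin n => (j : ℕ) < n - 1
  have hne : S.Nonempty := ⟨⟨0, by omega⟩, by simp [S]; omega⟩
  have hpiece : S.piecewise (ell F x ∘ s) s =
      fun j : Fin n => if (j : ℕ) < n - 1 then assocB F x y else z := by
    funext j
    by_cases hj : (j : ℕ) < n - 1 <;> simp [S, s, hj, ell]
  have h := hA.apply_piecewise_ell hS hI x s hne
  rwa [hpiece] at h

theorem ell_comp_comm (hA : NAssoc hn F) (hS : NSym F) (hI : NIdem F) (x y : X) :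
    ell F x ∘ ell F y = ell F y ∘ ell F x := by
  funext z
  let c : Fin n → X := fun _ => z
  have hc : F c = z := hI z
  have two_steps : ∀ (a b : X) (i j : Fin n), i ≠ j →
      ell F a (ell F b z) =
        F (Function.update (Function.update c i (ell F b z)) j (ell F a z)) := by
    intro a b i j hij
    calc ell F a (ell F b z) = ell F a (F (Function.update c i (ell F b (c i)))) := by
          rw [hA.apply_update_ell hS, hc]
      _ = _ := (hA.apply_update_ell hS a _ j).symm
      _ = _ := by rw [Function.update_of_ne hij.symm]
  have h01 : (⟨0, by omega⟩ : Fin n) ≠ ⟨1, by omega⟩ := by simp [Fin.ext_iff]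
  rw [Function.comp_apply, Function.comp_apply, two_steps x y _ _ h01, two_steps y x _ _ h01.symm,
    Function.update_comm h01]

end NaryBand

/-- In a symmetric `n`-ary band, the set `L = {ℓ_x : x ∈ X}` is
closed under composition and `(L,∘)` is a semilattice (composition on `L` is
associative, commutative and idempotent). -/
theorem stmt_5 {X : Type*} {n : ℕ} (hn : 2 ≤ n) (F : (Fin n → X) → X)
    (hA : NAssoc hn F) (hS : NSym F) (hI : NIdem F) :
    (∀ f g : X → X, f ∈ Set.range (ell F) → g ∈ Set.range (ell F) →
      f ∘ g ∈ Set.range (ell F)) ∧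
    (∀ f g h : X → X, f ∈ Set.range (ell F) → g ∈ Set.range (ell F) →
      h ∈ Set.range (ell F) → (f ∘ g) ∘ h = f ∘ (g ∘ h)) ∧
    (∀ f g : X → X, f ∈ Set.range (ell F) → g ∈ Set.range (ell F) → f ∘ g = g ∘ f) ∧
    (∀ f : X → X, f ∈ Set.range (ell F) → f ∘ f = f) := by
  refine ⟨?_, fun _ _ _ _ _ _ => rfl, ?_, ?_⟩
  · rintro _ _ ⟨x, rfl⟩ ⟨y, rfl⟩
    exact ⟨assocB F x y, ell_assocB hA hS hI x y⟩
  · rintro _ _ ⟨x, rfl⟩ ⟨y, rfl⟩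
    exact ell_comp_comm hA hS hI x y
  · rintro _ ⟨x, rfl⟩
    exact ell_comp_self hA hI x
end

section
/- Let (X,F) be a symmetric n-ary band and B its associated binary operation. The following are equivalent: (i) the map x ↦ ℓ_x from X to the set of self-maps of X is injective; (ii) B is commutative (so (X,B) is a semilattice); (iii) F is the n-ary extension of B, i.e., F = B^{n−1}. -/
namespace NaryBand

variable {X : Type*} {n : ℕ} {F : (Fin n → X) → X}

theorem assocB_self (hI : NIdem F) (a : X) : assocB F a a = a := by
  simp only [assocB, ite_self]
  exact hI a

theorem NAssoc.apply_contract_eq {hn : 2 ≤ n} (hA : NAssoc hn F) :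
    ∀ (i : ℕ) (hi : i ≤ n - 1) (x : Fin (2 * n - 1) → X),
      F (contract F i hn hi x) = F (contract F 0 hn (Nat.zero_le _) x)
  | 0, _, _ => rfl
  | i + 1, hi, x => (hA i hi x).symm.trans (hA.apply_contract_eq i (by omega) x)

theorem NAssoc.assocB_apply_eq_update_zero {hn : 2 ≤ n} (hA : NAssoc hn F) (a : X)
    (w : Fin n → X) :
    assocB F a (F w) = F (Function.update w ⟨0, by omega⟩ (assocB F a (w ⟨0, by omega⟩))) := by
  let x : Fin (2 * n - 1) → X := fun j =>
    if (j : ℕ) < n - 1 then a else w ⟨j - (n - 1), by omega⟩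
  have hlast :
      contract F (n - 1) hn le_rfl x = fun j : Fin n => if (j : ℕ) < n - 1 then a else F w := by
    funext j
    have := j.isLt
    simp only [contract, x]
    split_ifs <;> try first | rfl | omega
    congr 1
    funext k
    rw [if_neg (by omega)]
    congr 1
    ext
    simp
  have hfirst : contract F 0 hn (Nat.zero_le _) x =
      Function.update w ⟨0, by omega⟩ (assocB F a (w ⟨0, by omega⟩)) := by
    funext j
    by_cases hj : (j : ℕ) = 0
    · obtain rfl : j = ⟨0, by positivity⟩ := Fin.ext hj
      simp only [contract, x, assocB, Function.update_self, Nat.not_lt_zero, dite_false,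
        dif_pos, zero_add]
      congr 1
      funext k
      split_ifs
      · rfl
      · congr 1
        ext
        simp
        omega
    · have := j.isLt
      have hj' : j ≠ ⟨0, by omega⟩ := fun h => hj (by simp [h])
      simp only [contract, x, Function.update_of_ne hj', dif_neg hj, Nat.not_lt_zero, dite_false]
      rw [if_neg (by omega)]
      congr 1
      ext
      simp
      omega
  change F (fun j : Fin n => if (j : ℕ) < n - 1 then a else F w) = _
  rw [← hlast, hA.apply_contract_eq, hfirst]

theorem assocB_apply_eq_update {hn : 2 ≤ n} (hA : NAssoc hn F) (hS : NSym F) (a : X)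
    (w : Fin n → X) (i : Fin n) :
    assocB F a (F w) = F (Function.update w i (assocB F a (w i))) := by
  set σ := Equiv.swap (⟨0, by omega⟩ : Fin n) i
  have hσ : σ.symm i = ⟨0, by omega⟩ := by simp [σ]
  rw [← hS σ w, hA.assocB_apply_eq_update_zero, ← hS σ (Function.update w i _),
    Function.update_comp_equiv, hσ]
  simp [σ]

theorem assocB_apply_of_assocB_eq {hn : 2 ≤ n} (hA : NAssoc hn F) (hS : NSym F) {a : X}
    {w : Fin n → X} {i : Fin n} (h : assocB F a (w i) = w i) : assocB F a (F w) = F w := by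
  rw [assocB_apply_eq_update hA hS a w i, h, Function.update_eq_self]

theorem assocB_assocB_self {hn : 2 ≤ n} (hA : NAssoc hn F) (hS : NSym F) (hI : NIdem F)
    (a z : X) : assocB F a (assocB F a z) = assocB F a z :=
  assocB_apply_of_assocB_eq hA hS (i := ⟨0, by omega⟩)
    (by simp only [show 0 < n - 1 by omega, if_true, assocB_self hI])

theorem assocB_left_comm {hn : 2 ≤ n} (hA : NAssoc hn F) (hS : NSym F) (x y z : X) :
    assocB F x (assocB F y z) = assocB F y (assocB F x z) := by
  refine (assocB_apply_eq_update hA hS x _ ⟨n - 1, by omega⟩).trans (congrArg F ?_)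
  funext j
  have := j.isLt
  simp only [Function.update_apply, Fin.ext_iff, lt_irrefl, if_false]
  split_ifs <;> first | rfl | omega

theorem assocB_apply_piecewise {hn : 2 ≤ n} (hA : NAssoc hn F) (hS : NSym F) (hI : NIdem F)
    (a : X) (w : Fin n → X) (s : Finset (Fin n)) :
    assocB F a (F w) = assocB F a (F (s.piecewise (fun j => assocB F a (w j)) w)) := by
  induction s using Finset.induction_on with
  | empty => rw [Finset.piecewise_empty]
  | insert i s hi ih =>
    rw [Finset.piecewise_insert,
      ← Finset.piecewise_eq_of_notMem s (fun j => assocB F a (w j)) w hi,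
      ← assocB_apply_eq_update hA hS, assocB_assocB_self hA hS hI, ih]

theorem assocB_apply_comp {hn : 2 ≤ n} (hA : NAssoc hn F) (hS : NSym F) (hI : NIdem F)
    (a : X) (w : Fin n → X) : assocB F a (F w) = F (fun j => assocB F a (w j)) := by
  rw [assocB_apply_piecewise hA hS hI a w Finset.univ, Finset.piecewise_univ]
  exact assocB_apply_of_assocB_eq hA hS (i := ⟨0, by omega⟩) (assocB_assocB_self hA hS hI _ _)

theorem assocB_assoc {hn : 2 ≤ n} (hA : NAssoc hn F) (hS : NSym F) (hI : NIdem F)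
    (x y z : X) : assocB F (assocB F x y) z = assocB F x (assocB F y z) := by
  set u := assocB F x y
  have hxu : assocB F x u = u := assocB_assocB_self hA hS hI x y
  calc assocB F u z = assocB F x (assocB F u z) :=
        (assocB_apply_of_assocB_eq hA hS (i := ⟨0, by omega⟩)
          (by simp only [show 0 < n - 1 by omega, if_true, hxu])).symm
    _ = assocB F u (assocB F x z) := assocB_left_comm hA hS x u z
    _ = F (fun j : Fin n => assocB F x (if (j : ℕ) < n - 1 then y else z)) := by
        simp only [apply_ite (assocB F x)]
        rfl
    _ = assocB F x (assocB F y z) := (assocB_apply_comp hA hS hI x _).symm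

theorem assocB_foldr_right_of_mem {hn : 2 ≤ n} (hA : NAssoc hn F) (hS : NSym F)
    (hI : NIdem F) {b y : X} {L : List X} (hy : y ∈ b :: L) :
    assocB F y (L.foldr (assocB F) b) = L.foldr (assocB F) b := by
  induction L with
  | nil => rw [List.mem_singleton.1 hy, List.foldr_nil, assocB_self hI]
  | cons x L ih =>
    rcases List.mem_cons.1 hy with rfl | hy
    · rw [List.foldr_cons, assocB_left_comm hA hS, ih List.mem_cons_self]
    rcases List.mem_cons.1 hy with rfl | hy
    · exact assocB_assocB_self hA hS hI _ _
    · rw [List.foldr_cons, assocB_left_comm hA hS, ih (List.mem_cons_of_mem _ hy)]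

theorem assocB_foldr_left_of_forall_mem {hn : 2 ≤ n} (hA : NAssoc hn F) (hS : NSym F)
    (hI : NIdem F) {b t : X} {L : List X} (h : ∀ y ∈ b :: L, assocB F y t = t) :
    assocB F (L.foldr (assocB F) b) t = t := by
  induction L with
  | nil => exact h b List.mem_cons_self
  | cons x L ih =>
    have hL : ∀ y ∈ b :: L, assocB F y t = t := fun y hy =>
      h y (List.cons_subset_cons _ (List.subset_cons_self _ _) hy)
    rw [List.foldr_cons, assocB_assoc hA hS hI, ih hL, h x (by simp)]

theorem assocB_entry_nExt {hn : 2 ≤ n} (hA : NAssoc hn F) (hS : NSym F) (hI : NIdem F)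
    (w : Fin n → X) (i : Fin n) :
    assocB F (w i) (nExt (one_le_two.trans hn) (assocB F) w) =
      nExt (one_le_two.trans hn) (assocB F) w := by
  refine assocB_foldr_right_of_mem hA hS hI ?_
  by_cases hi : (i : ℕ) = n - 1
  · exact List.mem_cons.2 (Or.inl (congrArg w (Fin.ext hi)))
  · exact List.mem_cons_of_mem _ (List.mem_ofFn.2 ⟨⟨i, by omega⟩, rfl⟩)

theorem assocB_nExt_left_of_forall {hn : 2 ≤ n} (hA : NAssoc hn F) (hS : NSym F)
    (hI : NIdem F) {w : Fin n → X} {t : X} (h : ∀ i, assocB F (w i) t = t) :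
    assocB F (nExt (one_le_two.trans hn) (assocB F) w) t = t := by
  refine assocB_foldr_left_of_forall_mem hA hS hI fun y hy => ?_
  rcases List.mem_cons.1 hy with rfl | hy
  · exact h _
  · obtain ⟨k, rfl⟩ := List.mem_ofFn.1 hy
    exact h _

theorem nExt_ite_zero {G : X → X → X} (hG : ∀ a, G a a = a) (hn : 2 ≤ n) (x y : X) :
    nExt (one_le_two.trans hn) G (fun j : Fin n => if (j : ℕ) = 0 then y else x) = G y x := by
  obtain ⟨m, rfl⟩ := Nat.exists_eq_add_of_le' hn
  simp only [nExt, List.ofFn_succ, Fin.val_zero, if_pos, Fin.val_succ, Nat.succ_ne_zero,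
    if_false, List.ofFn_const, List.foldr_cons]
  rw [if_neg (by omega)]
  congr 1
  clear hn
  induction m with
  | zero => rfl
  | succ m ih => rw [List.replicate_succ, List.foldr_cons, ih, hG]

theorem eq_nExt_of_comm {hn : 2 ≤ n} (hA : NAssoc hn F) (hS : NSym F) (hI : NIdem F)
    (hcomm : ∀ x y : X, assocB F x y = assocB F y x) :
    F = nExt (one_le_two.trans hn) (assocB F) := by
  funext w
  set s := nExt (one_le_two.trans hn) (assocB F) w
  have hs_absorbs : ∀ i, assocB F s (w i) = s := fun i =>
    (hcomm _ _).trans (assocB_entry_nExt hA hS hI w i)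
  have hs_below : assocB F s (F w) = F w := assocB_nExt_left_of_forall hA hS hI fun i =>
    assocB_apply_of_assocB_eq hA hS (assocB_self hI (w i))
  calc F w = assocB F s (F w) := hs_below.symm
    _ = F (fun j => assocB F s (w j)) := assocB_apply_comp hA hS hI s w
    _ = s := by simp only [hs_absorbs]; exact hI s

theorem assocB_eq_apply_ite_zero (hn : 2 ≤ n) (hS : NSym F) (x y : X) :
    assocB F x y = F (fun j : Fin n => if (j : ℕ) = 0 then y else x) := by
  rw [← hS (Equiv.swap ⟨0, by omega⟩ ⟨n - 1, by omega⟩)]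
  refine congrArg F (funext fun j => ?_)
  have := j.isLt
  simp only [Function.comp_apply, Equiv.swap_apply_def, Fin.ext_iff]
  split_ifs <;> simp_all <;> omega

theorem comm_of_eq_nExt (hn : 2 ≤ n) (hS : NSym F) (hI : NIdem F)
    (h : F = nExt (one_le_two.trans hn) (assocB F)) (x y : X) : assocB F x y = assocB F y x := by
  rw [assocB_eq_apply_ite_zero hn hS, congrFun h, nExt_ite_zero (assocB_self hI) hn]

end NaryBand

open NaryBand

/-- For a symmetric `n`-ary band `(X,F)` with associated binary
operation `B`, the following are equivalent: (i) `x ↦ ℓ_x` is injective;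
(ii) `B` is commutative; (iii) `F` is the `n`-ary extension of `B`. -/
theorem stmt_7 {X : Type*} {n : ℕ} (hn : 2 ≤ n) (F : (Fin n → X) → X)
    (hA : NAssoc hn F) (hS : NSym F) (hI : NIdem F) :
    List.TFAE
      [Function.Injective (ell F),
       ∀ x y : X, assocB F x y = assocB F y x,
       F = nExt (by omega) (assocB F)] := by
  tfae_have 1 → 2 := fun hinj x y => hinj <| funext fun z => by
    simp only [ell, assocB_assoc hA hS hI, assocB_left_comm hA hS]
  tfae_have 2 → 1 := fun hcomm x y hxy => calc
    x = assocB F y x := (assocB_self hI x).symm.trans (congrFun hxy x)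
    _ = assocB F x y := hcomm y x
    _ = y := (congrFun hxy y).trans (assocB_self hI y)
  tfae_have 2 → 3 := eq_nExt_of_comm hA hS hI
  tfae_have 3 → 2 := comm_of_eq_nExt hn hS hI
  tfae_finish
end
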